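/- In any explanation S of the merged abduction instance ⟨H', M', T'⟩, exactly one of x⁺ and x⁻ belongs to S. -/
import Mathlib


/-- Propositional formulas over variables indexed by `Nat`. -/
inductive Fm where
  | var : Nat → Fm
  | tru : Fm
  | fls : Fm
  | neg : Fm → Fm
  | conj : Fm → Fm → Fm
  | disj : Fm → Fm → Fm
deriving DecidableEq

/-- Evaluation of a formula under an assignment. -/
def Fm.eval (σ : Nat → Bool) : Fm → Bool
  | .var n => σ n
  | .tru => true
  | .fls => false
  | .neg F => !(F.eval σ)
  | .conj F G => F.eval σ && G.eval σ
  | .disj F G => F.eval σ || G.eval σ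

/-- `F.subst x v` replaces every occurrence of variable `x` by the constant `v`. -/
def Fm.subst (x : Nat) (v : Bool) : Fm → Fm
  | .var n => if n = x then (if v then .tru else .fls) else .var n
  | .tru => .tru
  | .fls => .fls
  | .neg F => .neg (F.subst x v)
  | .conj F G => .conj (F.subst x v) (G.subst x v)
  | .disj F G => .disj (F.subst x v) (G.subst x v)

/-- `F.occurs x` : variable `x` occurs in `F`. -/
def Fm.occurs (x : Nat) : Fm → Prop
  | .var n => n = x
  | .tru => False
  | .fls => False
  | .neg F => F.occurs x
  | .conj F G => F.occurs x ∨ G.occurs x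
  | .disj F G => F.occurs x ∨ G.occurs x

/-- `σ` satisfies the set of variables `S` (as positive unit assumptions)
together with the theory `T`. -/
def SatSet (σ : Nat → Bool) (S : Set Nat) (T : Set Fm) : Prop :=
  (∀ n ∈ S, σ n = true) ∧ (∀ f ∈ T, f.eval σ = true)

/-- `S` is an explanation of the abduction instance `⟨H, M, T⟩`:
`S ⊆ H`, `S ∪ T` is consistent, and `S ∪ T` entails every manifestation in `M`. -/
def IsExplanation (H M : Set Nat) (T : Set Fm) (S : Set Nat) : Prop :=
  S ⊆ H ∧ (∃ σ, SatSet σ S T) ∧ (∀ σ, SatSet σ S T → ∀ m ∈ M, σ m = true)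

/-- Material implication as a formula. -/
def Fm.impl (f g : Fm) : Fm := .disj (.neg f) g

/-- The merged hypotheses `H' = H ∪ {x⁺, x⁻}`. -/
def mergedH (H : Set Nat) (xp xm : Nat) : Set Nat := H ∪ {xp, xm}

/-- The merged manifestations `M' = M ∪ {q}`. -/
def mergedM (M : Set Nat) (q : Nat) : Set Nat := M ∪ {q}

/-- The merged theory
`T' = T ∪ {x⁺ → q, x⁻ → q, x⁺ → x, x⁻ → ¬x, ¬x⁺ ∨ ¬x⁻}`. -/
def mergedT (T : Set Fm) (x xp xm q : Nat) : Set Fm :=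
  T ∪ {Fm.impl (.var xp) (.var q), Fm.impl (.var xm) (.var q),
       Fm.impl (.var xp) (.var x), Fm.impl (.var xm) (.neg (.var x)),
       .disj (.neg (.var xp)) (.neg (.var xm))}

theorem eval_congr (f : Fm) (σ σ' : Nat → Bool)
    (h : ∀ n, f.occurs n → σ n = σ' n) : f.eval σ = f.eval σ' := by
  induction f with
  | var n => exact h n rfl
  | tru => rfl
  | fls => rfl
  | neg F ih => simp [Fm.eval, ih (fun n hn => h n hn)]
  | conj F G ihF ihG =>
      simp [Fm.eval, ihF (fun n hn => h n (Or.inl hn)),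
        ihG (fun n hn => h n (Or.inr hn))]
  | disj F G ihF ihG =>
      simp [Fm.eval, ihF (fun n hn => h n (Or.inl hn)),
        ihG (fun n hn => h n (Or.inr hn))]

/-- every explanation of the merged instance contains exactly
one of `x⁺` and `x⁻`. -/
theorem abduction_merged_exactly_one (x xp xm q : Nat) (H M : Set Nat) (T : Set Fm)
    (hdist : x ≠ xp ∧ x ≠ xm ∧ x ≠ q ∧ xp ≠ xm ∧ xp ≠ q ∧ xm ≠ q)
    (hxH : x ∉ H) (hxM : x ∉ M)
    (hxpF : xp ∉ H ∧ xp ∉ M ∧ ∀ f ∈ T, ¬ f.occurs xp)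
    (hxmF : xm ∉ H ∧ xm ∉ M ∧ ∀ f ∈ T, ¬ f.occurs xm)
    (hqF : q ∉ H ∧ q ∉ M ∧ ∀ f ∈ T, ¬ f.occurs q) (S : Set Nat)
    (hS : IsExplanation (mergedH H xp xm) (mergedM M q) (mergedT T x xp xm q) S) :
    Xor' (xp ∈ S) (xm ∈ S) := by
  obtain ⟨hsub, ⟨σ, hσ⟩, hent⟩ := hS
  obtain ⟨hxxp, hxxm, hxq, hpm, hpq, hmq⟩ := hdist
  -- not both
  have hnotboth : ¬ (xp ∈ S ∧ xm ∈ S) := by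
    rintro ⟨hp, hm⟩
    have hp' := hσ.1 xp hp
    have hm' := hσ.1 xm hm
    have hf : (Fm.disj (.neg (.var xp)) (.neg (.var xm))).eval σ = true := by
      apply hσ.2
      right; simp [Set.mem_insert_iff]
    simp [Fm.eval, hp', hm'] at hf
  -- at least one
  have hone : xp ∈ S ∨ xm ∈ S := by
    by_contra hno
    push_neg at hno
    obtain ⟨hnp, hnm⟩ := hno
    have hSH : S ⊆ H := by
      intro n hn
      rcases hsub hn with h | h
      · exact h
      · rcases h with rfl | h
        · exact absurd hn hnp
        · simp at h; subst h; exact absurd hn hnm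
    set σ' : Nat → Bool := fun n => if n = xp ∨ n = xm ∨ n = q then false else σ n
      with hσ'def
    have hσ'S : SatSet σ' S (mergedT T x xp xm q) := by
      constructor
      · intro n hn
        have hnH := hSH hn
        have : ¬ (n = xp ∨ n = xm ∨ n = q) := by
          rintro (rfl | rfl | rfl)
          · exact hxpF.1 hnH
          · exact hxmF.1 hnH
          · exact hqF.1 hnH
        simp only [hσ'def, if_neg this]
        exact hσ.1 n hn
      · intro f hf
        rcases hf with hf | hf
        · have : f.eval σ' = f.eval σ := by
            apply eval_congr
            intro n hn
            have : ¬ (n = xp ∨ n = xm ∨ n = q) := by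
              rintro (rfl | rfl | rfl)
              · exact hxpF.2.2 f hf hn
              · exact hxmF.2.2 f hf hn
              · exact hqF.2.2 f hf hn
            simp only [hσ'def, if_neg this]
          rw [this]; exact hσ.2 f (Or.inl hf)
        · have hxp' : σ' xp = false := by simp [hσ'def]
          have hxm' : σ' xm = false := by simp [hσ'def]
          rcases hf with rfl | rfl | rfl | rfl | rfl <;>
            simp [Fm.eval, Fm.impl, hxp', hxm']
    have hq := hent σ' hσ'S q (Or.inr rfl)
    simp [hσ'def] at hq
  rcases hone with h | h
  · exact Or.inl ⟨h, fun hm => hnotboth ⟨h, hm⟩⟩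
  · exact Or.inr ⟨h, fun hp => hnotboth ⟨hp, h⟩⟩
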